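/- Let f_Θ be an L-layer ReLU network with total parameter Frobenius norm ||Θ||_F = √(∑_l ||θ_l||_F²) ≤ R_Θ, and let ℓ(·,y) be L_ℓ-Lipschitz with respect to the ℓ2 norm. Then the loss is Lipschitz in the parameters: for all parameter configurations Θ, Θ' in the ball of radius R_Θ, (1/n)∑_{i=1}^n |ℓ(f_Θ(x_i),y_i) - ℓ(f_{Θ'}(x_i),y_i)| ≤ √L · L_ℓ · ( (1/n)∑_i ||x_i||_2 ) · ( R_Θ/√(L-1) )^{L-1} · ||Θ - Θ'||_F. -/

import Mathlib

open Finset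

noncomputable section

/-- ReLU activation. -/
def relu (t : ℝ) : ℝ := max t 0

/-- Step function, the derivative of ReLU. -/
def stepFn (t : ℝ) : ℝ := if 0 < t then 1 else 0

/-- Hidden activations of a fully connected ReLU network:
`hiddenAct dims θ x l = σ(θ_l ⋯ σ(θ_1 x)⋯)` (0-based weights), with `hiddenAct 0 = x`. -/
def hiddenAct (dims : ℕ → ℕ)
    (θ : ∀ l : ℕ, Matrix (Fin (dims (l + 1))) (Fin (dims l)) ℝ)
    (x : Fin (dims 0) → ℝ) : (l : ℕ) → Fin (dims l) → ℝ
  | 0 => x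
  | l + 1 => fun i => relu (∑ j, θ l i j * hiddenAct dims θ x l j)

/-- Pre-activations `θ_{l+1} h_l`. -/
def preact (dims : ℕ → ℕ)
    (θ : ∀ l : ℕ, Matrix (Fin (dims (l + 1))) (Fin (dims l)) ℝ)
    (x : Fin (dims 0) → ℝ) (l : ℕ) : Fin (dims (l + 1)) → ℝ :=
  fun i => ∑ j, θ l i j * hiddenAct dims θ x l j

/-- Input-Jacobian of the hiddenAct activations:
`jacH 0 = I`, `jacH (l+1) = jacH l · θ_lᵀ · diag(step(preact l))`. -/
def jacH (dims : ℕ → ℕ)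
    (θ : ∀ l : ℕ, Matrix (Fin (dims (l + 1))) (Fin (dims l)) ℝ)
    (x : Fin (dims 0) → ℝ) : (l : ℕ) → Matrix (Fin (dims 0)) (Fin (dims l)) ℝ
  | 0 => 1
  | l + 1 => Matrix.of fun i j =>
      (∑ p, jacH dims θ x l i p * θ l j p) * stepFn (preact dims θ x l j)

/-- Output of the (m+1)-layer network `f(x) = θ_{m} σ(θ_{m-1} ⋯ σ(θ_0 x)⋯)`
(no activation on the last layer). -/
def netOut (dims : ℕ → ℕ)
    (θ : ∀ l : ℕ, Matrix (Fin (dims (l + 1))) (Fin (dims l)) ℝ)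
    (x : Fin (dims 0) → ℝ) (m : ℕ) : Fin (dims (m + 1)) → ℝ :=
  fun i => ∑ j, θ m i j * hiddenAct dims θ x m j

/-- Input-Jacobian `∇ₓ f(x) = θ_1ᵀ D_1 θ_2ᵀ ⋯ θ_{L-1}ᵀ D_{L-1} θ_Lᵀ` of the network,
a `dims 0 × dims (m+1)` matrix. -/
def jacNet (dims : ℕ → ℕ)
    (θ : ∀ l : ℕ, Matrix (Fin (dims (l + 1))) (Fin (dims l)) ℝ)
    (x : Fin (dims 0) → ℝ) (m : ℕ) : Matrix (Fin (dims 0)) (Fin (dims (m + 1))) ℝ :=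
  Matrix.of fun i j => ∑ p, jacH dims θ x m i p * θ m j p

end

namespace S11
variable {ι : Type*}

/-- Minkowski over a finset. -/
lemma sqrt_sum_sq_add (s : Finset ι) (u v : ι → ℝ) :
    Real.sqrt (∑ i ∈ s, (u i + v i) ^ 2) ≤
      Real.sqrt (∑ i ∈ s, u i ^ 2) + Real.sqrt (∑ i ∈ s, v i ^ 2) := by
  have hA : (0:ℝ) ≤ ∑ i ∈ s, u i ^ 2 := sum_nonneg fun _ _ => sq_nonneg _
  have hB : (0:ℝ) ≤ ∑ i ∈ s, v i ^ 2 := sum_nonneg fun _ _ => sq_nonneg _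
  have hcs := Real.sum_mul_le_sqrt_mul_sqrt s u v
  have hu := Real.sq_sqrt hA
  have hv := Real.sq_sqrt hB
  have hsum : ∑ i ∈ s, (u i + v i) ^ 2
      = (∑ i ∈ s, u i ^ 2) + 2 * (∑ i ∈ s, u i * v i) + ∑ i ∈ s, v i ^ 2 := by
    rw [Finset.mul_sum, ← Finset.sum_add_distrib, ← Finset.sum_add_distrib]
    exact Finset.sum_congr rfl fun i _ => by ring
  have key : ∑ i ∈ s, (u i + v i) ^ 2
      ≤ (Real.sqrt (∑ i ∈ s, u i ^ 2) + Real.sqrt (∑ i ∈ s, v i ^ 2)) ^ 2 := by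
    nlinarith [Real.sqrt_nonneg (∑ i ∈ s, u i ^ 2), Real.sqrt_nonneg (∑ i ∈ s, v i ^ 2)]
  calc Real.sqrt (∑ i ∈ s, (u i + v i) ^ 2) ≤ _ := Real.sqrt_le_sqrt key
    _ = _ := Real.sqrt_sq (by positivity)

lemma sqrt_sum_sq_mul (s : Finset ι) (c : ℝ) (hc : 0 ≤ c) (u : ι → ℝ) :
    Real.sqrt (∑ i ∈ s, (c * u i) ^ 2) = c * Real.sqrt (∑ i ∈ s, u i ^ 2) := by
  have : ∑ i ∈ s, (c * u i) ^ 2 = c ^ 2 * ∑ i ∈ s, u i ^ 2 := by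
    rw [Finset.mul_sum]; exact Finset.sum_congr rfl fun i _ => by ring
  rw [this, Real.sqrt_mul (sq_nonneg c), Real.sqrt_sq hc]

lemma sqrt_sum_sq_mono (s : Finset ι) {u v : ι → ℝ} (h : ∀ i ∈ s, |u i| ≤ v i) :
    Real.sqrt (∑ i ∈ s, u i ^ 2) ≤ Real.sqrt (∑ i ∈ s, v i ^ 2) := by
  apply Real.sqrt_le_sqrt
  apply Finset.sum_le_sum
  intro i hi
  calc u i ^ 2 = |u i| ^ 2 := (sq_abs _).symm
    _ ≤ v i ^ 2 := pow_le_pow_left₀ (abs_nonneg _) (h i hi) 2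

/-- Cauchy–Schwarz with ones. -/
lemma sum_le_sqrt_card_mul (s : Finset ι) (u : ι → ℝ) :
    ∑ i ∈ s, u i ≤ Real.sqrt s.card * Real.sqrt (∑ i ∈ s, u i ^ 2) := by
  have := Real.sum_mul_le_sqrt_mul_sqrt s (fun _ => (1:ℝ)) u
  simpa using this

/-- AM–GM. -/
lemma prod_le_div_sqrt_card_pow (s : Finset ι) (f : ι → ℝ) (hf : ∀ i ∈ s, 0 ≤ f i)
    {S : ℝ} (hS : 0 ≤ S) (h : ∑ i ∈ s, f i ^ 2 ≤ S ^ 2) (hcard : s.card ≠ 0) :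
    ∏ i ∈ s, f i ≤ (S / Real.sqrt s.card) ^ s.card := by
  have hc : (0:ℝ) < s.card := by positivity
  have hw : ∑ _i ∈ s, ((s.card : ℝ))⁻¹ = 1 := by
    rw [Finset.sum_const, nsmul_eq_mul]; field_simp
  have hgm := Real.geom_mean_le_arith_mean_weighted s (fun _ => ((s.card : ℝ))⁻¹)
    (fun i => f i ^ 2) (fun _ _ => by positivity) hw (fun i _ => sq_nonneg _)
  rw [Real.finset_prod_rpow s _ (fun i _ => sq_nonneg _) _] at hgm
  have hP : (0:ℝ) ≤ ∏ i ∈ s, f i := Finset.prod_nonneg hf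
  have hPP : (0:ℝ) ≤ ∏ i ∈ s, f i ^ 2 := Finset.prod_nonneg fun i _ => sq_nonneg _
  have hrhs : ∑ i ∈ s, ((s.card : ℝ))⁻¹ * f i ^ 2 ≤ S ^ 2 / s.card := by
    rw [← Finset.mul_sum]
    rw [div_eq_inv_mul]
    exact mul_le_mul_of_nonneg_left h (by positivity)
  -- raise to the card-th power
  have h2 : ∏ i ∈ s, f i ^ 2 ≤ (S ^ 2 / s.card) ^ s.card := by
    have := pow_le_pow_left₀ (Real.rpow_nonneg hPP _) (hgm.trans hrhs) s.card
    rwa [← Real.rpow_natCast ((∏ i ∈ s, f i ^ 2) ^ ((s.card:ℝ))⁻¹) s.card,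
      ← Real.rpow_mul hPP, inv_mul_cancel₀ (ne_of_gt hc), Real.rpow_one] at this
  have hsq : (∏ i ∈ s, f i) ^ 2 = ∏ i ∈ s, f i ^ 2 := by rw [Finset.prod_pow]
  have hfin : ((S / Real.sqrt s.card) ^ s.card) ^ 2 = (S ^ 2 / s.card) ^ s.card := by
    rw [← pow_mul, mul_comm, pow_mul, div_pow, Real.sq_sqrt hc.le]
  calc ∏ i ∈ s, f i = Real.sqrt ((∏ i ∈ s, f i) ^ 2) := (Real.sqrt_sq hP).symm
    _ ≤ Real.sqrt (((S / Real.sqrt s.card) ^ s.card) ^ 2) := by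
        apply Real.sqrt_le_sqrt; rw [hsq, hfin]; exact h2
    _ = (S / Real.sqrt s.card) ^ s.card := Real.sqrt_sq (by positivity)

noncomputable def nrm {d : ℕ} (v : Fin d → ℝ) : ℝ := Real.sqrt (∑ j, v j ^ 2)

lemma nrm_nonneg {d : ℕ} (v : Fin d → ℝ) : 0 ≤ nrm v := Real.sqrt_nonneg _

noncomputable def frob {a b : ℕ} (A : Matrix (Fin a) (Fin b) ℝ) : ℝ :=
  Real.sqrt (∑ i, ∑ j, A i j ^ 2)

lemma frob_nonneg {a b : ℕ} (A : Matrix (Fin a) (Fin b) ℝ) : 0 ≤ frob A := Real.sqrt_nonneg _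

lemma frob_sub_comm {a b : ℕ} (A B : Matrix (Fin a) (Fin b) ℝ) :
    frob (A - B) = frob (B - A) := by
  unfold frob
  congr 1
  refine Finset.sum_congr rfl fun i _ => Finset.sum_congr rfl fun j _ => ?_
  simp [Matrix.sub_apply]; ring

/-- Cauchy–Schwarz for matrix-vector products. -/
lemma nrm_matvec {a b : ℕ} (A : Matrix (Fin a) (Fin b) ℝ) (v : Fin b → ℝ) :
    nrm (fun i => ∑ j, A i j * v j) ≤ frob A * nrm v := by
  unfold nrm frob
  rw [← Real.sqrt_mul (by positivity)]
  apply Real.sqrt_le_sqrt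
  calc ∑ i, (∑ j, A i j * v j) ^ 2
      ≤ ∑ i, (∑ j, A i j ^ 2) * ∑ j, v j ^ 2 :=
        Finset.sum_le_sum fun i _ => sum_mul_sq_le_sq_mul_sq _ _ _
    _ = (∑ i, ∑ j, A i j ^ 2) * ∑ j, v j ^ 2 := by rw [Finset.sum_mul]

/-- relu is 1-Lipschitz coordinatewise; nrm contraction. -/
lemma nrm_relu_sub {d : ℕ} (u v : Fin d → ℝ) :
    nrm (fun i => relu (u i) - relu (v i)) ≤ nrm (fun i => u i - v i) := by
  unfold nrm
  apply Real.sqrt_le_sqrt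
  apply Finset.sum_le_sum
  intro i _
  have h : |relu (u i) - relu (v i)| ≤ |u i - v i| := abs_max_sub_max_le_abs _ _ _
  calc (relu (u i) - relu (v i)) ^ 2 = |relu (u i) - relu (v i)| ^ 2 := (sq_abs _).symm
    _ ≤ |u i - v i| ^ 2 := pow_le_pow_left₀ (abs_nonneg _) h 2
    _ = (u i - v i) ^ 2 := sq_abs _

lemma nrm_triangle {d : ℕ} (u v : Fin d → ℝ) :
    nrm (fun i => u i + v i) ≤ nrm u + nrm v := sqrt_sum_sq_add _ _ _

abbrev Θt (dims : ℕ → ℕ) := ∀ l : ℕ, Matrix (Fin (dims (l + 1))) (Fin (dims l)) ℝ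

section Net
variable (dims : ℕ → ℕ)

noncomputable def W (θ : Θt dims) (l : ℕ) : ℝ := frob (θ l)

lemma W_nonneg (θ : Θt dims) (l : ℕ) : 0 ≤ W dims θ l := frob_nonneg _

lemma nrm_hiddenAct_le (θ : Θt dims) (x : Fin (dims 0) → ℝ) (l : ℕ) :
    nrm (hiddenAct dims θ x l) ≤ (∏ j ∈ range l, W dims θ j) * nrm x := by
  induction l with
  | zero => simp [hiddenAct]
  | succ l ih =>
    have h0 : nrm (hiddenAct dims θ x (l + 1))
        ≤ nrm (fun i => ∑ j, θ l i j * hiddenAct dims θ x l j) := by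
      unfold nrm
      apply Real.sqrt_le_sqrt
      apply Finset.sum_le_sum
      intro i _
      show relu _ ^ 2 ≤ _
      have h1 : |relu (∑ j, θ l i j * hiddenAct dims θ x l j)|
          ≤ |∑ j, θ l i j * hiddenAct dims θ x l j| := by
        have hnn : (0:ℝ) ≤ relu (∑ j, θ l i j * hiddenAct dims θ x l j) := le_max_right _ _
        rw [abs_of_nonneg hnn]
        exact max_le (le_abs_self _) (abs_nonneg _)
      calc relu _ ^ 2 = |relu _| ^ 2 := (sq_abs _).symm
        _ ≤ |_| ^ 2 := pow_le_pow_left₀ (abs_nonneg _) h1 2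
        _ = _ := sq_abs _
    calc nrm (hiddenAct dims θ x (l + 1)) ≤ _ := h0
      _ ≤ frob (θ l) * nrm (hiddenAct dims θ x l) := nrm_matvec _ _
      _ ≤ frob (θ l) * ((∏ j ∈ range l, W dims θ j) * nrm x) :=
          mul_le_mul_of_nonneg_left ih (frob_nonneg _)
      _ = (∏ j ∈ range (l + 1), W dims θ j) * nrm x := by
          rw [Finset.prod_range_succ]; simp only [W]; ring

lemma hiddenAct_congr {θ θ' : Θt dims} (x : Fin (dims 0) → ℝ) {l : ℕ}
    (h : ∀ j < l, θ j = θ' j) :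
    hiddenAct dims θ x l = hiddenAct dims θ' x l := by
  induction l with
  | zero => rfl
  | succ l ih =>
    funext i
    show relu (∑ j, θ l i j * hiddenAct dims θ x l j) = _
    rw [ih fun j hj => h j (hj.trans (Nat.lt_succ_self l)), h l (Nat.lt_succ_self l)]
    rfl

end Net

section Net2
variable (dims : ℕ → ℕ)

/-- Per-layer factor for a one-layer change at `k`. -/
noncomputable def g (θ θ' : Θt dims) (k j : ℕ) : ℝ :=
  if j = k then frob (θ k - θ' k) else W dims θ j

lemma g_nonneg (θ θ' : Θt dims) (k j : ℕ) : 0 ≤ g dims θ θ' k j := by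
  unfold g; split <;> exact frob_nonneg _

lemma diff_one_layer (θ θ' : Θt dims) (x : Fin (dims 0) → ℝ) (k : ℕ)
    (hag : ∀ j, j ≠ k → θ j = θ' j) (l : ℕ) :
    nrm (fun i => hiddenAct dims θ x l i - hiddenAct dims θ' x l i) ≤
      (∏ j ∈ range l, g dims θ θ' k j) * nrm x := by
  induction l with
  | zero =>
    have : (fun i => hiddenAct dims θ x 0 i - hiddenAct dims θ' x 0 i) = fun _ => (0:ℝ) := by
      funext i; show x i - x i = 0; ring
    rw [this]
    have : nrm (fun _ : Fin (dims 0) => (0:ℝ)) = 0 := by simp [nrm]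
    rw [this]
    exact mul_nonneg (Finset.prod_nonneg fun j _ => g_nonneg _ _ _ _ _) (nrm_nonneg _)
  | succ l ih =>
    have h0 : nrm (fun i => hiddenAct dims θ x (l+1) i - hiddenAct dims θ' x (l+1) i)
        ≤ nrm (fun i => (∑ j, θ l i j * hiddenAct dims θ x l j)
            - ∑ j, θ' l i j * hiddenAct dims θ' x l j) :=
      nrm_relu_sub _ _
    by_cases hlk : l = k
    · subst hlk
      have heq : hiddenAct dims θ x l = hiddenAct dims θ' x l :=
        hiddenAct_congr dims x fun j hj => hag j (Nat.ne_of_lt hj)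
      have h1 : (fun i => (∑ j, θ l i j * hiddenAct dims θ x l j)
            - ∑ j, θ' l i j * hiddenAct dims θ' x l j)
          = fun i => ∑ j, (θ l - θ' l) i j * hiddenAct dims θ x l j := by
        funext i
        rw [← Finset.sum_sub_distrib]
        refine Finset.sum_congr rfl fun j _ => ?_
        rw [← heq]
        simp [Matrix.sub_apply]
        ring
      calc nrm _ ≤ _ := h0
        _ = nrm (fun i => ∑ j, (θ l - θ' l) i j * hiddenAct dims θ x l j) := by rw [h1]
        _ ≤ frob (θ l - θ' l) * nrm (hiddenAct dims θ x l) := nrm_matvec _ _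
        _ ≤ frob (θ l - θ' l) * ((∏ j ∈ range l, W dims θ j) * nrm x) :=
            mul_le_mul_of_nonneg_left (nrm_hiddenAct_le dims θ x l) (frob_nonneg _)
        _ = ((∏ j ∈ range l, W dims θ j) * g dims θ θ' l l) * nrm x := by
            simp only [g, if_pos]; ring
        _ ≤ (∏ j ∈ range (l+1), g dims θ θ' l j) * nrm x := by
            rw [Finset.prod_range_succ]
            apply mul_le_mul_of_nonneg_right _ (nrm_nonneg _)
            apply mul_le_mul_of_nonneg_right _ (g_nonneg _ _ _ _ _)
            apply Finset.prod_le_prod (fun j _ => W_nonneg dims θ j)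
            intro j hj
            rw [Finset.mem_range] at hj
            simp only [g, if_neg (Nat.ne_of_lt hj)]
            exact le_rfl
    · have hθl : θ' l = θ l := (hag l hlk).symm
      have h1 : (fun i => (∑ j, θ l i j * hiddenAct dims θ x l j)
            - ∑ j, θ' l i j * hiddenAct dims θ' x l j)
          = fun i => ∑ j, θ l i j * (hiddenAct dims θ x l j - hiddenAct dims θ' x l j) := by
        funext i
        rw [hθl, ← Finset.sum_sub_distrib]
        exact Finset.sum_congr rfl fun j _ => by ring
      calc nrm _ ≤ _ := h0
        _ = nrm (fun i => ∑ j, θ l i j *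
              (hiddenAct dims θ x l j - hiddenAct dims θ' x l j)) := by rw [h1]
        _ ≤ frob (θ l) * nrm (fun j => hiddenAct dims θ x l j - hiddenAct dims θ' x l j) :=
            nrm_matvec _ _
        _ ≤ frob (θ l) * ((∏ j ∈ range l, g dims θ θ' k j) * nrm x) :=
            mul_le_mul_of_nonneg_left ih (frob_nonneg _)
        _ = (∏ j ∈ range (l+1), g dims θ θ' k j) * nrm x := by
            rw [Finset.prod_range_succ]
            simp only [g, if_neg hlk, W]; ring

lemma netOut_congr {θ θ' : Θt dims} (x : Fin (dims 0) → ℝ) {m : ℕ}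
    (h : ∀ j < m + 1, θ j = θ' j) :
    netOut dims θ x m = netOut dims θ' x m := by
  funext i
  show (∑ j, θ m i j * hiddenAct dims θ x m j) = _
  rw [hiddenAct_congr dims x fun j hj => h j (hj.trans (Nat.lt_succ_self m)),
    h m (Nat.lt_succ_self m)]
  rfl

lemma netOut_diff_one (θ θ' : Θt dims) (x : Fin (dims 0) → ℝ) (k m : ℕ)
    (hag : ∀ j, j ≠ k → θ j = θ' j) :
    nrm (fun i => netOut dims θ x m i - netOut dims θ' x m i) ≤
      (∏ j ∈ range (m+1), g dims θ θ' k j) * nrm x := by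
  by_cases hmk : m = k
  · subst hmk
    have heq : hiddenAct dims θ x m = hiddenAct dims θ' x m :=
      hiddenAct_congr dims x fun j hj => hag j (Nat.ne_of_lt hj)
    have h1 : (fun i => netOut dims θ x m i - netOut dims θ' x m i)
        = fun i => ∑ j, (θ m - θ' m) i j * hiddenAct dims θ x m j := by
      funext i
      show (∑ j, θ m i j * hiddenAct dims θ x m j) - (∑ j, θ' m i j * hiddenAct dims θ' x m j) = _
      rw [← Finset.sum_sub_distrib]
      refine Finset.sum_congr rfl fun j _ => ?_
      rw [← heq]
      simp [Matrix.sub_apply]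
      ring
    calc nrm _ = nrm (fun i => ∑ j, (θ m - θ' m) i j * hiddenAct dims θ x m j) := by rw [h1]
      _ ≤ frob (θ m - θ' m) * nrm (hiddenAct dims θ x m) := nrm_matvec _ _
      _ ≤ frob (θ m - θ' m) * ((∏ j ∈ range m, W dims θ j) * nrm x) :=
          mul_le_mul_of_nonneg_left (nrm_hiddenAct_le dims θ x m) (frob_nonneg _)
      _ = ((∏ j ∈ range m, W dims θ j) * g dims θ θ' m m) * nrm x := by
          simp only [g, if_pos]; ring
      _ ≤ (∏ j ∈ range (m+1), g dims θ θ' m j) * nrm x := by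
          rw [Finset.prod_range_succ]
          apply mul_le_mul_of_nonneg_right _ (nrm_nonneg _)
          apply mul_le_mul_of_nonneg_right _ (g_nonneg _ _ _ _ _)
          apply Finset.prod_le_prod (fun j _ => W_nonneg dims θ j)
          intro j hj
          rw [Finset.mem_range] at hj
          simp only [g, if_neg (Nat.ne_of_lt hj)]
          exact le_rfl
  · have hθm : θ' m = θ m := (hag m hmk).symm
    have h1 : (fun i => netOut dims θ x m i - netOut dims θ' x m i)
        = fun i => ∑ j, θ m i j * (hiddenAct dims θ x m j - hiddenAct dims θ' x m j) := by
      funext i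
      show (∑ j, θ m i j * hiddenAct dims θ x m j) - (∑ j, θ' m i j * hiddenAct dims θ' x m j) = _
      rw [hθm, ← Finset.sum_sub_distrib]
      exact Finset.sum_congr rfl fun j _ => by ring
    calc nrm _ = nrm (fun i => ∑ j, θ m i j *
            (hiddenAct dims θ x m j - hiddenAct dims θ' x m j)) := by rw [h1]
      _ ≤ frob (θ m) * nrm (fun j => hiddenAct dims θ x m j - hiddenAct dims θ' x m j) :=
          nrm_matvec _ _
      _ ≤ frob (θ m) * ((∏ j ∈ range m, g dims θ θ' k j) * nrm x) :=
          mul_le_mul_of_nonneg_left (diff_one_layer dims θ θ' x k hag m) (frob_nonneg _)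
      _ = (∏ j ∈ range (m+1), g dims θ θ' k j) * nrm x := by
          rw [Finset.prod_range_succ]
          simp only [g, if_neg hmk, W]; ring

end Net2

/-- Telescoping for `nrm`. -/
lemma nrm_telescope {d : ℕ} (f : ℕ → Fin d → ℝ) (N : ℕ) :
    nrm (fun i => f N i - f 0 i) ≤ ∑ t ∈ range N, nrm (fun i => f (t+1) i - f t i) := by
  induction N with
  | zero =>
    have : (fun i => f 0 i - f 0 i) = fun _ => (0:ℝ) := by funext i; ring
    simp [this, nrm]
  | succ N ih =>
    have h1 : (fun i => f (N+1) i - f 0 i)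
        = fun i => (f (N+1) i - f N i) + (f N i - f 0 i) := by funext i; ring
    rw [h1, Finset.sum_range_succ]
    calc nrm _ ≤ nrm (fun i => f (N+1) i - f N i) + nrm (fun i => f N i - f 0 i) :=
        nrm_triangle _ _
      _ ≤ _ := by rw [add_comm]; exact add_le_add ih le_rfl

lemma nrm_sub_comm {d : ℕ} (u v : Fin d → ℝ) :
    nrm (fun i => u i - v i) = nrm (fun i => v i - u i) := by
  unfold nrm
  congr 1
  exact Finset.sum_congr rfl fun i _ => by ring

section Path
variable (dims : ℕ → ℕ)

lemma dsum_to_prod {a b : ℕ} (f : Fin a → Fin b → ℝ) :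
    ∑ i, ∑ j, f i j = ∑ p : Fin a × Fin b, f p.1 p.2 :=
  (Fintype.sum_prod_type (fun p : Fin a × Fin b => f p.1 p.2)).symm

lemma frob_eq_prod {a b : ℕ} (A : Matrix (Fin a) (Fin b) ℝ) :
    frob A = Real.sqrt (∑ p : Fin a × Fin b, A p.1 p.2 ^ 2) := by
  rw [frob, dsum_to_prod (fun i j => A i j ^ 2)]

lemma frob_sq {a b : ℕ} (A : Matrix (Fin a) (Fin b) ℝ) :
    frob A ^ 2 = ∑ i, ∑ j, A i j ^ 2 :=
  Real.sq_sqrt (by positivity)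

lemma frob_add_le {a b : ℕ} (A B : Matrix (Fin a) (Fin b) ℝ) :
    frob (A + B) ≤ frob A + frob B := by
  rw [frob_eq_prod, frob_eq_prod, frob_eq_prod]
  have h := sqrt_sum_sq_add (univ : Finset (Fin a × Fin b)) (fun p => A p.1 p.2)
    (fun p => B p.1 p.2)
  simpa [Matrix.add_apply] using h

lemma frob_smul {a b : ℕ} {c : ℝ} (hc : 0 ≤ c) (A : Matrix (Fin a) (Fin b) ℝ) :
    frob (c • A) = c * frob A := by
  rw [frob_eq_prod, frob_eq_prod]
  have h := sqrt_sum_sq_mul (univ : Finset (Fin a × Fin b)) c hc (fun p => A p.1 p.2)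
  simpa [Matrix.smul_apply, smul_eq_mul] using h

noncomputable def pathθ (θ θ' : Θt dims) (c : ℝ) : Θt dims :=
  fun l => (1 - c) • θ l + c • θ' l

def hybθ (θa θb : Θt dims) (k : ℕ) : Θt dims :=
  fun l => if l < k then θb l else θa l

lemma pathθ_zero (θ θ' : Θt dims) : pathθ dims θ θ' 0 = θ := by
  funext l; simp [pathθ]

lemma pathθ_one (θ θ' : Θt dims) : pathθ dims θ θ' 1 = θ' := by
  funext l; simp [pathθ]

lemma pathθ_step (θ θ' : Θt dims) (N t : ℕ) (l : ℕ) :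
    pathθ dims θ θ' (((t:ℝ)+1) / N) l - pathθ dims θ θ' ((t:ℝ) / N) l
      = (N:ℝ)⁻¹ • (θ' l - θ l) := by
  ext i j
  simp only [pathθ, Matrix.sub_apply, Matrix.add_apply, Matrix.smul_apply, smul_eq_mul]
  ring

lemma frob_path_le (θ θ' : Θt dims) {c : ℝ} (hc0 : 0 ≤ c) (hc1 : c ≤ 1) (l : ℕ) :
    frob (pathθ dims θ θ' c l) ≤ (1 - c) * frob (θ l) + c * frob (θ' l) := by
  calc frob (pathθ dims θ θ' c l) ≤ frob ((1-c) • θ l) + frob (c • θ' l) := frob_add_le _ _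
    _ = (1 - c) * frob (θ l) + c * frob (θ' l) := by
        rw [frob_smul (by linarith) , frob_smul hc0]

/-- Path points stay in the ball. -/
lemma path_ball (θ θ' : Θt dims) (m : ℕ) {RΘ : ℝ}
    (hθ : Real.sqrt (∑ l ∈ range (m + 1), ∑ i, ∑ j, (θ l i j) ^ 2) ≤ RΘ)
    (hθ' : Real.sqrt (∑ l ∈ range (m + 1), ∑ i, ∑ j, (θ' l i j) ^ 2) ≤ RΘ)
    {c : ℝ} (hc0 : 0 ≤ c) (hc1 : c ≤ 1) :
    Real.sqrt (∑ l ∈ range (m + 1), frob (pathθ dims θ θ' c l) ^ 2) ≤ RΘ := by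
  have h1 : Real.sqrt (∑ l ∈ range (m + 1), frob (pathθ dims θ θ' c l) ^ 2)
      ≤ Real.sqrt (∑ l ∈ range (m + 1),
          ((1 - c) * frob (θ l) + c * frob (θ' l)) ^ 2) := by
    apply sqrt_sum_sq_mono
    intro l _
    rw [abs_of_nonneg (frob_nonneg _)]
    exact frob_path_le dims θ θ' hc0 hc1 l
  have h2 := sqrt_sum_sq_add (range (m+1)) (fun l => (1 - c) * frob (θ l))
    (fun l => c * frob (θ' l))
  rw [sqrt_sum_sq_mul _ _ (by linarith : (0:ℝ) ≤ 1 - c),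
    sqrt_sum_sq_mul _ _ hc0] at h2
  have hu : Real.sqrt (∑ l ∈ range (m + 1), frob (θ l) ^ 2) ≤ RΘ := by
    have : ∑ l ∈ range (m + 1), frob (θ l) ^ 2
        = ∑ l ∈ range (m + 1), ∑ i, ∑ j, (θ l i j) ^ 2 :=
      Finset.sum_congr rfl fun l _ => frob_sq _
    rw [this]; exact hθ
  have hv : Real.sqrt (∑ l ∈ range (m + 1), frob (θ' l) ^ 2) ≤ RΘ := by
    have : ∑ l ∈ range (m + 1), frob (θ' l) ^ 2
        = ∑ l ∈ range (m + 1), ∑ i, ∑ j, (θ' l i j) ^ 2 :=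
      Finset.sum_congr rfl fun l _ => frob_sq _
    rw [this]; exact hθ'
  have hfin : (1 - c) * Real.sqrt (∑ l ∈ range (m + 1), frob (θ l) ^ 2)
      + c * Real.sqrt (∑ l ∈ range (m + 1), frob (θ' l) ^ 2) ≤ RΘ := by
    have := mul_le_mul_of_nonneg_left hu (by linarith : (0:ℝ) ≤ 1 - c)
    have := mul_le_mul_of_nonneg_left hv hc0
    nlinarith
  exact h1.trans (h2.trans hfin)

end Path
section Key
variable (dims : ℕ → ℕ)

lemma key_eps (m : ℕ) (hm : 1 ≤ m) (θ θ' : Θt dims) (RΘ : ℝ) (hRΘ : 0 ≤ RΘ)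
    (hθ : Real.sqrt (∑ l ∈ range (m + 1), ∑ i, ∑ j, (θ l i j) ^ 2) ≤ RΘ)
    (hθ' : Real.sqrt (∑ l ∈ range (m + 1), ∑ i, ∑ j, (θ' l i j) ^ 2) ≤ RΘ)
    (x : Fin (dims 0) → ℝ) {ε : ℝ} (hε : 0 < ε) :
    nrm (fun i => netOut dims θ x m i - netOut dims θ' x m i) ≤
      Real.sqrt ((m:ℝ) + 1) * ((RΘ + ε) / Real.sqrt m) ^ m *
      Real.sqrt (∑ l ∈ range (m + 1), ∑ i, ∑ j, (θ l i j - θ' l i j) ^ 2) * nrm x := by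
  set D := Real.sqrt (∑ l ∈ range (m + 1), ∑ i, ∑ j, (θ l i j - θ' l i j) ^ 2) with hDdef
  have hD : 0 ≤ D := Real.sqrt_nonneg _
  have hDfrob : ∑ l ∈ range (m + 1), frob (θ' l - θ l) ^ 2 = D ^ 2 := by
    rw [hDdef, Real.sq_sqrt (by positivity)]
    refine Finset.sum_congr rfl fun l _ => ?_
    rw [frob_sq]
    refine Finset.sum_congr rfl fun i _ => Finset.sum_congr rfl fun j _ => ?_
    simp [Matrix.sub_apply]; ring
  -- choose N
  set N : ℕ := max 1 ⌈D / ε⌉₊ with hNdef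
  have hN1 : 1 ≤ N := le_max_left _ _
  have hNpos : (0:ℝ) < N := by exact_mod_cast Nat.lt_of_lt_of_le Nat.zero_lt_one hN1
  have hNε : D * (N:ℝ)⁻¹ ≤ ε := by
    have h1 : D / ε ≤ (⌈D / ε⌉₊ : ℝ) := Nat.le_ceil _
    have h2 : ((⌈D / ε⌉₊ : ℕ) : ℝ) ≤ (N : ℝ) := by exact_mod_cast le_max_right 1 ⌈D / ε⌉₊
    have : D / ε ≤ (N : ℝ) := h1.trans h2
    rw [div_le_iff₀ hε] at this
    rw [mul_inv_le_iff₀ hNpos]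
    linarith [this, mul_comm (N:ℝ) ε]
  set B : ℝ := ((RΘ + ε) / Real.sqrt m) ^ m with hBdef
  have hB : 0 ≤ B := by positivity
  set K : ℝ := Real.sqrt ((m:ℝ) + 1) with hKdef
  have hK : 0 ≤ K := Real.sqrt_nonneg _
  set P : ℕ → Θt dims := fun t => pathθ dims θ θ' ((t:ℝ) / N) with hPdef
  -- per-step bound
  have step : ∀ t ∈ range N,
      nrm (fun i => netOut dims (P (t+1)) x m i - netOut dims (P t) x m i) ≤
        (N:ℝ)⁻¹ * (K * B * D * nrm x) := by
    intro t ht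
    rw [Finset.mem_range] at ht
    have hc0 : (0:ℝ) ≤ (t:ℝ) / N := by positivity
    have hc1 : (t:ℝ) / N ≤ 1 := by
      rw [div_le_one hNpos]; exact_mod_cast ht.le
    set F : ℕ → Fin (dims (m+1)) → ℝ :=
      fun k => netOut dims (hybθ dims (P t) (P (t+1)) k) x m with hFdef
    have hhyb0 : hybθ dims (P t) (P (t+1)) 0 = P t := by
      funext l; simp [hybθ]
    have hF0 : F 0 = netOut dims (P t) x m := by
      show netOut dims (hybθ dims (P t) (P (t+1)) 0) x m = _
      rw [hhyb0]
    have hFm : F (m+1) = netOut dims (P (t+1)) x m := by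
      show netOut dims (hybθ dims (P t) (P (t+1)) (m+1)) x m = _
      exact netOut_congr dims x fun j hj => by simp [hybθ, hj]
    have htel := nrm_telescope F (m+1)
    rw [hF0, hFm] at htel
    -- bound each telescoping term
    have hterm : ∀ k ∈ range (m+1),
        nrm (fun i => F (k+1) i - F k i) ≤
          ((N:ℝ)⁻¹ * frob (θ' k - θ k)) * (B * nrm x) := by
      intro k hk
      rw [Finset.mem_range] at hk
      have hag : ∀ j, j ≠ k → hybθ dims (P t) (P (t+1)) (k+1) j
          = hybθ dims (P t) (P (t+1)) k j := by
        intro j hjk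
        simp only [hybθ]
        by_cases hj : j < k
        · rw [if_pos (by omega), if_pos hj]
        · rw [if_neg (by omega), if_neg hj]
      have hbase := netOut_diff_one dims (hybθ dims (P t) (P (t+1)) (k+1))
        (hybθ dims (P t) (P (t+1)) k) x k m hag
      -- identify the changed-layer factor
      have hgk : hybθ dims (P t) (P (t+1)) (k+1) k - hybθ dims (P t) (P (t+1)) k k
          = (N:ℝ)⁻¹ • (θ' k - θ k) := by
        simp only [hybθ, if_pos (Nat.lt_succ_self k), if_neg (lt_irrefl k)]
        have := pathθ_step dims θ θ' N t k
        rw [hPdef]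
        push_cast
        push_cast at this
        exact this
      -- bound the product
      have hprod : (∏ j ∈ range (m+1),
          g dims (hybθ dims (P t) (P (t+1)) (k+1)) (hybθ dims (P t) (P (t+1)) k) k j)
          ≤ ((N:ℝ)⁻¹ * frob (θ' k - θ k)) * B := by
        have hkmem : k ∈ range (m+1) := Finset.mem_range.mpr hk
        rw [← Finset.mul_prod_erase _ _ hkmem]
        have hgkval : g dims (hybθ dims (P t) (P (t+1)) (k+1))
            (hybθ dims (P t) (P (t+1)) k) k k = (N:ℝ)⁻¹ * frob (θ' k - θ k) := by
          simp only [g, if_pos]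
          rw [hgk, frob_smul (by positivity)]
        rw [hgkval]
        apply mul_le_mul_of_nonneg_left _
          (mul_nonneg (by positivity) (frob_nonneg _))
        -- erase product ≤ B by AM-GM
        have herase : ∀ j ∈ (range (m+1)).erase k,
            g dims (hybθ dims (P t) (P (t+1)) (k+1)) (hybθ dims (P t) (P (t+1)) k) k j
            = frob (hybθ dims (P t) (P (t+1)) (k+1) j) := by
          intro j hj
          simp only [g, if_neg (Finset.ne_of_mem_erase hj), W]
        rw [Finset.prod_congr rfl herase]
        have hcard : ((range (m+1)).erase k).card = m := by
          rw [Finset.card_erase_of_mem hkmem, Finset.card_range]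
          omega
        -- layerwise bound on hybrid norms
        have hlayer : ∀ l, frob (hybθ dims (P t) (P (t+1)) (k+1) l)
            ≤ frob (P t l) + (N:ℝ)⁻¹ * frob (θ' l - θ l) := by
          intro l
          simp only [hybθ]
          by_cases hl : l < k + 1
          · rw [if_pos hl]
            have hid : P (t+1) l = P t l + ((N:ℝ)⁻¹ • (θ' l - θ l)) := by
              have := pathθ_step dims θ θ' N t l
              rw [hPdef]
              have h2 : pathθ dims θ θ' ((↑(t+1):ℝ) / N) l
                  = pathθ dims θ θ' ((t:ℝ) / N) l + (N:ℝ)⁻¹ • (θ' l - θ l) := by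
                push_cast
                rw [← this]; ring_nf
                abel
              exact h2
            rw [hid]
            calc frob _ ≤ frob (P t l) + frob ((N:ℝ)⁻¹ • (θ' l - θ l)) := frob_add_le _ _
              _ = frob (P t l) + (N:ℝ)⁻¹ * frob (θ' l - θ l) := by
                  rw [frob_smul (by positivity)]
          · rw [if_neg hl]
            have : (0:ℝ) ≤ (N:ℝ)⁻¹ * frob (θ' l - θ l) := by
              have := frob_nonneg (θ' l - θ l); positivity
            linarith
        -- sum of squares bound
        have hsumsq : ∑ j ∈ (range (m+1)).erase k,
            frob (hybθ dims (P t) (P (t+1)) (k+1) j) ^ 2 ≤ (RΘ + ε) ^ 2 := by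
          have hsub : ∑ j ∈ (range (m+1)).erase k,
              frob (hybθ dims (P t) (P (t+1)) (k+1) j) ^ 2
              ≤ ∑ j ∈ range (m+1), frob (hybθ dims (P t) (P (t+1)) (k+1) j) ^ 2 :=
            Finset.sum_le_sum_of_subset_of_nonneg (Finset.erase_subset _ _)
              fun j _ _ => sq_nonneg _
          have hmono : ∑ j ∈ range (m+1), frob (hybθ dims (P t) (P (t+1)) (k+1) j) ^ 2
              ≤ ∑ j ∈ range (m+1),
                (frob (P t j) + (N:ℝ)⁻¹ * frob (θ' j - θ j)) ^ 2 := by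
            apply Finset.sum_le_sum
            intro j _
            have h1 := hlayer j
            have h2 := frob_nonneg (hybθ dims (P t) (P (t+1)) (k+1) j)
            nlinarith
          have hmink : Real.sqrt (∑ j ∈ range (m+1),
              (frob (P t j) + (N:ℝ)⁻¹ * frob (θ' j - θ j)) ^ 2) ≤ RΘ + ε := by
            have h3 := sqrt_sum_sq_add (range (m+1)) (fun j => frob (P t j))
              (fun j => (N:ℝ)⁻¹ * frob (θ' j - θ j))
            have h4 : Real.sqrt (∑ j ∈ range (m+1), frob (P t j) ^ 2) ≤ RΘ := by
              rw [hPdef]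
              exact path_ball dims θ θ' m hθ hθ' hc0 hc1
            have h5 : Real.sqrt (∑ j ∈ range (m+1),
                ((N:ℝ)⁻¹ * frob (θ' j - θ j)) ^ 2) = (N:ℝ)⁻¹ * D := by
              rw [sqrt_sum_sq_mul _ _ (by positivity), hDfrob, Real.sqrt_sq hD]
            rw [h5] at h3
            have h6 : (N:ℝ)⁻¹ * D ≤ ε := by rw [mul_comm]; exact hNε
            linarith
          have h7 : ∑ j ∈ range (m+1),
              (frob (P t j) + (N:ℝ)⁻¹ * frob (θ' j - θ j)) ^ 2 ≤ (RΘ + ε) ^ 2 := by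
            have hnn : (0:ℝ) ≤ ∑ j ∈ range (m+1),
                (frob (P t j) + (N:ℝ)⁻¹ * frob (θ' j - θ j)) ^ 2 :=
              Finset.sum_nonneg fun j _ => sq_nonneg _
            calc ∑ j ∈ range (m+1), (frob (P t j) + (N:ℝ)⁻¹ * frob (θ' j - θ j)) ^ 2
                = Real.sqrt (∑ j ∈ range (m+1),
                    (frob (P t j) + (N:ℝ)⁻¹ * frob (θ' j - θ j)) ^ 2) ^ 2 :=
                  (Real.sq_sqrt hnn).symm
              _ ≤ (RΘ + ε) ^ 2 :=
                  pow_le_pow_left₀ (Real.sqrt_nonneg _) hmink 2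
          linarith
        have hamgm := prod_le_div_sqrt_card_pow ((range (m+1)).erase k)
          (fun j => frob (hybθ dims (P t) (P (t+1)) (k+1) j))
          (fun j _ => frob_nonneg _) (by positivity) hsumsq (by rw [hcard]; omega)
        rw [hcard] at hamgm
        rw [hBdef]
        exact_mod_cast hamgm
      calc nrm (fun i => F (k+1) i - F k i) ≤ _ := hbase
        _ ≤ (((N:ℝ)⁻¹ * frob (θ' k - θ k)) * B) * nrm x :=
            mul_le_mul_of_nonneg_right hprod (nrm_nonneg _)
        _ = ((N:ℝ)⁻¹ * frob (θ' k - θ k)) * (B * nrm x) := by ring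
    -- sum telescoping terms
    have hsum : ∑ k ∈ range (m+1), nrm (fun i => F (k+1) i - F k i)
        ≤ (N:ℝ)⁻¹ * (K * B * D * nrm x) := by
      calc ∑ k ∈ range (m+1), nrm (fun i => F (k+1) i - F k i)
          ≤ ∑ k ∈ range (m+1), ((N:ℝ)⁻¹ * frob (θ' k - θ k)) * (B * nrm x) :=
            Finset.sum_le_sum hterm
        _ = (N:ℝ)⁻¹ * (B * nrm x) * ∑ k ∈ range (m+1), frob (θ' k - θ k) := by
            rw [Finset.mul_sum]
            exact Finset.sum_congr rfl fun k _ => by ring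
        _ ≤ (N:ℝ)⁻¹ * (B * nrm x) * (K * D) := by
            apply mul_le_mul_of_nonneg_left _
              (mul_nonneg (by positivity) (mul_nonneg hB (nrm_nonneg _)))
            have hcs := sum_le_sqrt_card_mul (range (m+1)) (fun k => frob (θ' k - θ k))
            rw [hDfrob, Real.sqrt_sq hD, Finset.card_range] at hcs
            rw [hKdef]
            exact_mod_cast hcs
        _ = (N:ℝ)⁻¹ * (K * B * D * nrm x) := by ring
    exact htel.trans hsum
  -- telescope over the path
  have hP0 : P 0 = θ := by
    rw [hPdef]
    simp only [Nat.cast_zero, zero_div]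
    exact pathθ_zero dims θ θ'
  have hPN : P N = θ' := by
    rw [hPdef]
    simp only []
    rw [div_self (ne_of_gt hNpos)]
    exact pathθ_one dims θ θ'
  have htel2 := nrm_telescope (fun t => netOut dims (P t) x m) N
  rw [hP0, hPN] at htel2
  have htotal : ∑ t ∈ range N, nrm (fun i => netOut dims (P (t+1)) x m i
      - netOut dims (P t) x m i) ≤ K * B * D * nrm x := by
    calc ∑ t ∈ range N, nrm (fun i => netOut dims (P (t+1)) x m i - netOut dims (P t) x m i)
        ≤ ∑ _t ∈ range N, (N:ℝ)⁻¹ * (K * B * D * nrm x) := Finset.sum_le_sum step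
      _ = N * ((N:ℝ)⁻¹ * (K * B * D * nrm x)) := by
          rw [Finset.sum_const, Finset.card_range, nsmul_eq_mul]
      _ = K * B * D * nrm x := by
          field_simp
  rw [nrm_sub_comm]
  exact htel2.trans htotal

end Key
lemma key (dims : ℕ → ℕ) (m : ℕ) (hm : 1 ≤ m) (θ θ' : Θt dims) (RΘ : ℝ) (hRΘ : 0 ≤ RΘ)
    (hθ : Real.sqrt (∑ l ∈ range (m + 1), ∑ i, ∑ j, (θ l i j) ^ 2) ≤ RΘ)
    (hθ' : Real.sqrt (∑ l ∈ range (m + 1), ∑ i, ∑ j, (θ' l i j) ^ 2) ≤ RΘ)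
    (x : Fin (dims 0) → ℝ) :
    nrm (fun i => netOut dims θ x m i - netOut dims θ' x m i) ≤
      Real.sqrt ((m:ℝ) + 1) * (RΘ / Real.sqrt m) ^ m *
      Real.sqrt (∑ l ∈ range (m + 1), ∑ i, ∑ j, (θ l i j - θ' l i j) ^ 2) * nrm x := by
  set D := Real.sqrt (∑ l ∈ range (m + 1), ∑ i, ∑ j, (θ l i j - θ' l i j) ^ 2) with hDdef
  have hcont : Continuous (fun ε : ℝ =>
      Real.sqrt ((m:ℝ) + 1) * ((RΘ + ε) / Real.sqrt m) ^ m * D * nrm x) := by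
    apply Continuous.mul _ continuous_const
    apply Continuous.mul _ continuous_const
    apply Continuous.mul continuous_const
    apply Continuous.pow
    exact (continuous_const.add continuous_id).div_const _
  have htend : Filter.Tendsto (fun ε : ℝ =>
      Real.sqrt ((m:ℝ) + 1) * ((RΘ + ε) / Real.sqrt m) ^ m * D * nrm x)
      (nhdsWithin 0 (Set.Ioi 0))
      (nhds (Real.sqrt ((m:ℝ) + 1) * (RΘ / Real.sqrt m) ^ m * D * nrm x)) := by
    have h0 := (hcont.tendsto 0).mono_left
      (nhdsWithin_le_nhds (s := Set.Ioi (0:ℝ)))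
    simpa using h0
  refine ge_of_tendsto htend ?_
  filter_upwards [self_mem_nhdsWithin] with ε hε
  exact key_eps dims m hm θ θ' RΘ hRΘ hθ hθ' x hε

end S11

open Finset in
/-- Parameter-Lipschitzness of the loss of an `L = m+1` layer ReLU network (`L ≥ 2`):
for `‖Θ‖_F, ‖Θ'‖_F ≤ R_Θ` and an `L_ℓ`-Lipschitz loss,
`(1/n)∑ᵢ |ℓ(f_Θ(xᵢ),yᵢ) - ℓ(f_Θ'(xᵢ),yᵢ)|
  ≤ √L · L_ℓ · ((1/n)∑ᵢ‖xᵢ‖₂) · (R_Θ/√(L-1))^{L-1} · ‖Θ-Θ'‖_F`. -/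
theorem stmt11 (dims : ℕ → ℕ) (m : ℕ) (hm : 1 ≤ m)
    (θ θ' : ∀ l : ℕ, Matrix (Fin (dims (l + 1))) (Fin (dims l)) ℝ)
    (RΘ Lℓ : ℝ) (hRΘ : 0 ≤ RΘ) (hLℓ : 0 ≤ Lℓ)
    (hθ : Real.sqrt (∑ l ∈ range (m + 1), ∑ i, ∑ j, (θ l i j) ^ 2) ≤ RΘ)
    (hθ' : Real.sqrt (∑ l ∈ range (m + 1), ∑ i, ∑ j, (θ' l i j) ^ 2) ≤ RΘ)
    {Y : Type} (ℓ : (Fin (dims (m + 1)) → ℝ) → Y → ℝ)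
    (hLip : ∀ u v : Fin (dims (m + 1)) → ℝ, ∀ y : Y,
      |ℓ u y - ℓ v y| ≤ Lℓ * Real.sqrt (∑ j, (u j - v j) ^ 2))
    (n : ℕ) (hn : 0 < n) (x : Fin n → Fin (dims 0) → ℝ) (y : Fin n → Y) :
    (n : ℝ)⁻¹ * ∑ i, |ℓ (netOut dims θ (x i) m) (y i) - ℓ (netOut dims θ' (x i) m) (y i)| ≤
      Real.sqrt ((m : ℝ) + 1) * Lℓ *
        ((n : ℝ)⁻¹ * ∑ i, Real.sqrt (∑ a, (x i a) ^ 2)) *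
        (RΘ / Real.sqrt (m : ℝ)) ^ m *
        Real.sqrt (∑ l ∈ range (m + 1), ∑ i, ∑ j, (θ l i j - θ' l i j) ^ 2) := by
  set D := Real.sqrt (∑ l ∈ range (m + 1), ∑ i, ∑ j, (θ l i j - θ' l i j) ^ 2) with hDdef
  set K := Real.sqrt ((m : ℝ) + 1) with hKdef
  set B := (RΘ / Real.sqrt (m : ℝ)) ^ m with hBdef
  have hptwise : ∀ i : Fin n,
      |ℓ (netOut dims θ (x i) m) (y i) - ℓ (netOut dims θ' (x i) m) (y i)|
        ≤ Lℓ * (K * B * D * S11.nrm (x i)) := by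
    intro i
    have h1 := hLip (netOut dims θ (x i) m) (netOut dims θ' (x i) m) (y i)
    have h2 := S11.key dims m hm θ θ' RΘ hRΘ hθ hθ' (x i)
    have h3 : Real.sqrt (∑ j, (netOut dims θ (x i) m j - netOut dims θ' (x i) m j) ^ 2)
        = S11.nrm (fun j => netOut dims θ (x i) m j - netOut dims θ' (x i) m j) := rfl
    rw [h3] at h1
    calc |ℓ (netOut dims θ (x i) m) (y i) - ℓ (netOut dims θ' (x i) m) (y i)|
        ≤ Lℓ * S11.nrm (fun j => netOut dims θ (x i) m j - netOut dims θ' (x i) m j) := h1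
      _ ≤ Lℓ * (K * B * D * S11.nrm (x i)) := mul_le_mul_of_nonneg_left h2 hLℓ
  have hxeq : ∀ i : Fin n, S11.nrm (x i) = Real.sqrt (∑ a, (x i a) ^ 2) := fun i => rfl
  calc (n : ℝ)⁻¹ * ∑ i, |ℓ (netOut dims θ (x i) m) (y i) - ℓ (netOut dims θ' (x i) m) (y i)|
      ≤ (n : ℝ)⁻¹ * ∑ i, Lℓ * (K * B * D * S11.nrm (x i)) := by
        apply mul_le_mul_of_nonneg_left (Finset.sum_le_sum fun i _ => hptwise i)
          (by positivity)
    _ = K * Lℓ * ((n : ℝ)⁻¹ * ∑ i, Real.sqrt (∑ a, (x i a) ^ 2)) * B * D := by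
        simp only [hxeq]
        have : ∑ i, Lℓ * (K * B * D * Real.sqrt (∑ a, (x i a) ^ 2))
            = (Lℓ * (K * B * D)) * ∑ i, Real.sqrt (∑ a, (x i a) ^ 2) := by
          rw [Finset.mul_sum]
          exact Finset.sum_congr rfl fun i _ => by ring
        rw [this]
        ring
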